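/- arXiv:2011.03827 — 2 statements merged into one kernel-verified Lean document; each statement's English description precedes it below -/
import Mathlib

section
/- Let k > 0 and let d_tot > 0, d_rad be real numbers with |d_rad| ≤ d_tot. Define F = (1/k)·log(cosh(k·d_tot) + (d_rad/d_tot)·sinh(k·d_tot)), J_min = (1/(2·d_tot²))·(d_tot - sinh(k·d_tot)/(k·(cosh(k·d_tot) + sinh(k·d_tot)))), and J_max = (1/(2·d_tot²))·(-d_tot + sinh(k·d_tot)/(k·(cosh(k·d_tot) - sinh(k·d_tot)))). Then d_rad + J_min·(d_tot² - d_rad²) ≤ F ≤ d_rad + J_max·(d_tot² - d_rad²). -/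
/-!
Put `a = k dtot` and `u = drad / dtot ∈ [-1, 1]`. After multiplying by `k`, both bounds compare
`g u = log (cosh a + u sinh a)` with parabolas `a u + m (1 - u²)`, which agree with `g` at
`u = ±1` because `cosh a ± sinh a = exp (± a)`. The constant `m` of the lower (upper) parabola
makes its slope agree with `g` at `u = 1` (`u = -1`). Since `g' u = sinh a / (cosh a + u sinh a)`
is convex for `a ≥ 0`, the difference of `g` and either parabola has a convex or concave
derivative vanishing at one endpoint. Together with a Rolle point in the interior this makes the
difference increase and then decrease, so it stays above its endpoint values, which are zero.
-/

open Set Real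

section
variable {f f' : ℝ → ℝ} {a b : ℝ}

lemma nonneg_of_deriv_nonneg_of_deriv_nonpos {c : ℝ} (hc : c ∈ Icc a b)
    (hf : ∀ x ∈ Icc a b, HasDerivAt f (f' x) x)
    (hf'₁ : ∀ x ∈ Icc a c, 0 ≤ f' x) (hf'₂ : ∀ x ∈ Icc c b, f' x ≤ 0)
    (ha : 0 ≤ f a) (hb : 0 ≤ f b) {x : ℝ} (hx : x ∈ Icc a b) : 0 ≤ f x := by
  have hcont : ContinuousOn f (Icc a b) := fun x hx => (hf x hx).continuousAt.continuousWithinAt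
  rcases le_total x c with hxc | hcx
  · have hsub : Icc a c ⊆ Icc a b := Icc_subset_Icc_right hc.2
    have hmono : MonotoneOn f (Icc a c) :=
      monotoneOn_of_hasDerivWithinAt_nonneg (convex_Icc a c) (hcont.mono hsub)
        (fun y hy => (hf y (hsub (interior_subset hy))).hasDerivWithinAt)
        (fun y hy => hf'₁ y (interior_subset hy))
    exact ha.trans (hmono (left_mem_Icc.2 (hx.1.trans hxc)) ⟨hx.1, hxc⟩ hx.1)
  · have hsub : Icc c b ⊆ Icc a b := Icc_subset_Icc_left hc.1
    have hanti : AntitoneOn f (Icc c b) :=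
      antitoneOn_of_hasDerivWithinAt_nonpos (convex_Icc c b) (hcont.mono hsub)
        (fun y hy => (hf y (hsub (interior_subset hy))).hasDerivWithinAt)
        (fun y hy => hf'₂ y (interior_subset hy))
    exact hb.trans (hanti ⟨hcx, hx.2⟩ (right_mem_Icc.2 (hcx.trans hx.2)) hx.2)

lemma nonneg_of_convexOn_deriv (hab : a < b) (hf : ∀ x ∈ Icc a b, HasDerivAt f (f' x) x)
    (hf' : ConvexOn ℝ (Icc a b) f') (ha : f a = 0) (hb : f b = 0) (hb' : f' b = 0)
    {x : ℝ} (hx : x ∈ Icc a b) : 0 ≤ f x := by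
  obtain ⟨c, hc, hc'⟩ := exists_hasDerivAt_eq_zero hab
    (fun x hx => (hf x hx).continuousAt.continuousWithinAt) (ha.trans hb.symm)
    (fun x hx => hf x (Ioo_subset_Icc_self hx))
  have hbI : b ∈ Icc a b := right_mem_Icc.2 hab.le
  refine nonneg_of_deriv_nonneg_of_deriv_nonpos (Ioo_subset_Icc_self hc) hf
    (fun y hy => ?_) (fun y hy => ?_) ha.ge hb.ge hx
  · rw [← hc']
    exact hf'.le_left_of_right_le'' ⟨hy.1, hy.2.trans hc.2.le⟩ hbI hy.2 hc.2
      (hb'.trans hc'.symm).le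
  · simpa [hc', hb'] using
      hf'.le_on_segment (Ioo_subset_Icc_self hc) hbI (by rwa [segment_eq_Icc hc.2.le])

lemma nonneg_of_concaveOn_deriv (hab : a < b) (hf : ∀ x ∈ Icc a b, HasDerivAt f (f' x) x)
    (hf' : ConcaveOn ℝ (Icc a b) f') (ha : f a = 0) (hb : f b = 0) (ha' : f' a = 0)
    {x : ℝ} (hx : x ∈ Icc a b) : 0 ≤ f x := by
  obtain ⟨c, hc, hc'⟩ := exists_hasDerivAt_eq_zero hab
    (fun x hx => (hf x hx).continuousAt.continuousWithinAt) (ha.trans hb.symm)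
    (fun x hx => hf x (Ioo_subset_Icc_self hx))
  have haI : a ∈ Icc a b := left_mem_Icc.2 hab.le
  refine nonneg_of_deriv_nonneg_of_deriv_nonpos (Ioo_subset_Icc_self hc) hf
    (fun y hy => ?_) (fun y hy => ?_) ha.ge hb.ge hx
  · simpa [hc', ha'] using
      hf'.ge_on_segment haI (Ioo_subset_Icc_self hc) (by rwa [segment_eq_Icc hc.1.le])
  · rw [← hc']
    exact hf'.right_le_of_le_left'' haI ⟨hc.1.le.trans hy.1, hy.2⟩ hc.1 hy.1
      (hc'.trans ha'.symm).le

end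

lemma cosh_add_mul_sinh_pos (a : ℝ) {u : ℝ} (hu : u ∈ Icc (-1 : ℝ) 1) :
    0 < cosh a + u * sinh a := by
  have hsinh : |sinh a| < cosh a := by
    rw [abs_sinh, ← cosh_abs]
    exact sinh_lt_cosh _
  have hmul : |u * sinh a| ≤ |sinh a| := by
    rw [abs_mul]
    exact mul_le_of_le_one_left (abs_nonneg _) (abs_le.2 hu)
  linarith [neg_abs_le (u * sinh a)]

lemma convexOn_sinh_div_cosh_add_mul_sinh {a : ℝ} (ha : 0 ≤ a) :
    ConvexOn ℝ (Icc (-1) 1) fun u => sinh a / (cosh a + u * sinh a) := by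
  have := ((convexOn_zpow (𝕜 := ℝ) (-1)).comp_affineMap
    (AffineMap.lineMap (cosh a) (cosh a + sinh a))).smul (sinh_nonneg_iff.2 ha)
  refine (this.subset ?_ (convex_Icc _ _)).congr ?_
  · intro u hu
    simpa [AffineMap.lineMap_apply_ring', add_comm] using cosh_add_mul_sinh_pos a hu
  · intro u _
    simp [AffineMap.lineMap_apply_ring', div_eq_mul_inv, add_comm]

lemma hasDerivAt_parabola (a m u : ℝ) :
    HasDerivAt (fun u => a * u + m * (1 - u ^ 2)) (a - 2 * m * u) u :=
  (((hasDerivAt_id' u).const_mul a).add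
    (((hasDerivAt_pow 2 u).const_sub 1).const_mul m)).congr_deriv (by ring)

section
variable {a : ℝ}

lemma hasDerivAt_log_cosh_add_mul_sinh {u : ℝ} (hu : u ∈ Icc (-1 : ℝ) 1) :
    HasDerivAt (fun u => log (cosh a + u * sinh a)) (sinh a / (cosh a + u * sinh a)) u := by
  simpa using (((hasDerivAt_id u).mul_const (sinh a)).const_add (cosh a)).log
    (cosh_add_mul_sinh_pos a hu).ne'

lemma parabola_le_log_cosh_add_mul_sinh (ha : 0 ≤ a) {u : ℝ} (hu : u ∈ Icc (-1 : ℝ) 1) :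
    a * u + (a - sinh a / (cosh a + sinh a)) / 2 * (1 - u ^ 2) ≤ log (cosh a + u * sinh a) := by
  set m := (a - sinh a / (cosh a + sinh a)) / 2
  have hconv : ConvexOn ℝ (Icc (-1) 1)
      fun u => sinh a / (cosh a + u * sinh a) - (a - 2 * m * u) := by
    refine (((convexOn_sinh_div_cosh_add_mul_sinh ha).add_const (-a)).add
      ((LinearMap.mul ℝ ℝ (2 * m)).convexOn (convex_Icc _ _))).congr fun u _ => ?_
    simp only [Pi.add_apply, LinearMap.mul_apply_apply]
    ring
  have := nonneg_of_convexOn_deriv (by norm_num)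
    (fun u hu => (hasDerivAt_log_cosh_add_mul_sinh hu).sub (hasDerivAt_parabola a m u)) hconv
    (by simp [← sub_eq_add_neg]) (by simp) (by simp only [one_mul, cosh_add_sinh, m]; ring) hu
  simpa using this

lemma log_cosh_add_mul_sinh_le_parabola (ha : 0 ≤ a) {u : ℝ} (hu : u ∈ Icc (-1 : ℝ) 1) :
    log (cosh a + u * sinh a) ≤ a * u + (sinh a / (cosh a - sinh a) - a) / 2 * (1 - u ^ 2) := by
  set m := (sinh a / (cosh a - sinh a) - a) / 2
  have hconc : ConcaveOn ℝ (Icc (-1) 1)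
      fun u => a - 2 * m * u - sinh a / (cosh a + u * sinh a) := by
    refine (((convexOn_sinh_div_cosh_add_mul_sinh ha).neg.add_const a).add
      ((LinearMap.mul ℝ ℝ (-2 * m)).concaveOn (convex_Icc _ _))).congr fun u _ => ?_
    simp only [Pi.add_apply, Pi.neg_apply, LinearMap.mul_apply_apply]
    ring
  have := nonneg_of_concaveOn_deriv (by norm_num)
    (fun u hu => (hasDerivAt_parabola a m u).sub (hasDerivAt_log_cosh_add_mul_sinh hu)) hconc
    (by simp [← sub_eq_add_neg]) (by simp)
    (by simp only [cosh_sub_sinh, neg_mul, one_mul, ← sub_eq_add_neg, m]; ring) hu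
  simpa using this

end

theorem F_between_Jmin_Jmax (k dtot drad : ℝ) (hk : 0 < k) (hdtot : 0 < dtot)
    (hdrad : |drad| ≤ dtot) :
    drad + (1 / (2 * dtot ^ 2)) *
        (dtot - Real.sinh (k * dtot) / (k * (Real.cosh (k * dtot) + Real.sinh (k * dtot)))) *
        (dtot ^ 2 - drad ^ 2) ≤
      (1 / k) * Real.log (Real.cosh (k * dtot) + (drad / dtot) * Real.sinh (k * dtot)) ∧
    (1 / k) * Real.log (Real.cosh (k * dtot) + (drad / dtot) * Real.sinh (k * dtot)) ≤
      drad + (1 / (2 * dtot ^ 2)) *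
        (-dtot + Real.sinh (k * dtot) / (k * (Real.cosh (k * dtot) - Real.sinh (k * dtot)))) *
        (dtot ^ 2 - drad ^ 2) := by
  have ha : 0 ≤ k * dtot := (mul_pos hk hdtot).le
  have hu : drad / dtot ∈ Icc (-1 : ℝ) 1 := by
    rw [mem_Icc, le_div_iff₀ hdtot, div_le_iff₀ hdtot]
    constructor <;> linarith [abs_le.1 hdrad]
  constructor
  · refine le_of_eq_of_le ?_
      (mul_le_mul_of_nonneg_left (parabola_le_log_cosh_add_mul_sinh ha hu) (by positivity))
    rw [cosh_add_sinh]
    field_simp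
  · refine le_of_le_of_eq
      (mul_le_mul_of_nonneg_left (log_cosh_add_mul_sinh_le_parabola ha hu) (by positivity)) ?_
    rw [cosh_sub_sinh]
    field_simp
    ring
end

section
/- For all k > 0 and d > 0, the function t ↦ 1/t - (1/(2k·t²))·(1 - exp(-2kt)) is positive and decreasing in t on (0, ∞). -/
/-! Substituting `u = 2 k t` turns the function into `2 k · g (2 k t)` with
`g u = (u - 1 + exp (-u)) / u ^ 2`. The numerator is positive because `exp` lies strictly above
its tangent line at `0`, and `u ^ 3 g' u = 2 - u - (u + 2) exp (-u)`, which is nonpositive since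
`(u + 2) exp (-u) + u` is nondecreasing (its derivative is `1 - (u + 1) exp (-u) ≥ 0`). -/

open Real Set

lemma hasDerivAt_exp_neg (v : ℝ) : HasDerivAt (fun u : ℝ => exp (-u)) (-exp (-v)) v := by
  simpa using (hasDerivAt_neg v).exp

lemma hasDerivAt_add_two_mul_exp_neg_add (v : ℝ) :
    HasDerivAt (fun u : ℝ => (u + 2) * exp (-u) + u) (1 - (v + 1) * exp (-v)) v :=
  ((((hasDerivAt_id' v).add_const 2).mul (hasDerivAt_exp_neg v)).add (hasDerivAt_id' v))
    |>.congr_deriv (by ring)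

lemma two_sub_le_add_two_mul_exp_neg {u : ℝ} (hu : 0 ≤ u) : 2 - u ≤ (u + 2) * exp (-u) := by
  have hmono : MonotoneOn (fun u : ℝ => (u + 2) * exp (-u) + u) (Ici 0) := by
    refine monotoneOn_of_hasDerivWithinAt_nonneg (convex_Ici 0)
      (fun v _ => (hasDerivAt_add_two_mul_exp_neg_add v).continuousAt.continuousWithinAt)
      (fun v _ => (hasDerivAt_add_two_mul_exp_neg_add v).hasDerivWithinAt) fun v _ => ?_
    rw [sub_nonneg, ← le_div_iff₀ (exp_pos _), exp_neg, div_inv_eq_mul, one_mul]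
    linarith [add_one_le_exp v]
  have := hmono self_mem_Ici (mem_Ici.mpr hu) hu
  simp only [zero_add, neg_zero, exp_zero, mul_one] at this
  linarith

lemma sub_one_add_exp_neg_div_sq_pos {u : ℝ} (hu : u ≠ 0) : 0 < (u - 1 + exp (-u)) / u ^ 2 := by
  have := add_one_lt_exp (neg_ne_zero.mpr hu)
  exact div_pos (by linarith) (by positivity)

lemma hasDerivAt_sub_one_add_exp_neg_div_sq {v : ℝ} (hv : v ≠ 0) :
    HasDerivAt (fun u : ℝ => (u - 1 + exp (-u)) / u ^ 2)
      ((2 - v - (v + 2) * exp (-v)) / v ^ 3) v := by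
  have hnum : HasDerivAt (fun u : ℝ => u - 1 + exp (-u)) (1 - exp (-v)) v :=
    ((hasDerivAt_id' v).sub_const 1 |>.add (hasDerivAt_exp_neg v)).congr_deriv (by ring)
  refine (hnum.div (hasDerivAt_pow 2 v) (by positivity)).congr_deriv ?_
  field_simp
  ring

lemma antitoneOn_sub_one_add_exp_neg_div_sq :
    AntitoneOn (fun u : ℝ => (u - 1 + exp (-u)) / u ^ 2) (Ioi 0) := by
  refine antitoneOn_of_hasDerivWithinAt_nonpos
    (f' := fun v => (2 - v - (v + 2) * exp (-v)) / v ^ 3) (convex_Ioi 0)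
    (fun v hv => (hasDerivAt_sub_one_add_exp_neg_div_sq (ne_of_gt hv)).continuousAt
      |>.continuousWithinAt)
    (fun v hv => ?_) fun v hv => ?_ <;> rw [interior_Ioi] at hv
  · rw [interior_Ioi]
    exact (hasDerivAt_sub_one_add_exp_neg_div_sq (ne_of_gt hv)).hasDerivWithinAt
  · have := two_sub_le_add_two_mul_exp_neg hv.le
    exact div_nonpos_of_nonpos_of_nonneg (by linarith) (pow_pos hv 3).le

theorem aux_function_pos_antitone (k : ℝ) (hk : 0 < k) :
    (∀ t : ℝ, 0 < t →
      0 < 1 / t - (1 / (2 * k * t ^ 2)) * (1 - Real.exp (-(2 * k * t)))) ∧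
    AntitoneOn (fun t : ℝ => 1 / t - (1 / (2 * k * t ^ 2)) * (1 - Real.exp (-(2 * k * t))))
      (Set.Ioi 0) := by
  have hscale : ∀ t : ℝ, 0 < t → 1 / t - (1 / (2 * k * t ^ 2)) * (1 - exp (-(2 * k * t))) =
      2 * k * ((2 * k * t - 1 + exp (-(2 * k * t))) / (2 * k * t) ^ 2) := by
    intro t ht
    field_simp
    ring
  have hpos : ∀ t : ℝ, 0 < t → 0 < 2 * k * t := fun t ht => by positivity
  refine ⟨fun t ht => ?_, fun s hs t ht hst => ?_⟩
  · rw [hscale t ht]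
    exact mul_pos (by positivity) (sub_one_add_exp_neg_div_sq_pos (hpos t ht).ne')
  · simp only [hscale s hs, hscale t ht]
    have := antitoneOn_sub_one_add_exp_neg_div_sq (mem_Ioi.mpr (hpos s hs))
      (mem_Ioi.mpr (hpos t ht)) (by gcongr)
    exact mul_le_mul_of_nonneg_left this (by positivity)
end
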